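/- Let G be a finite group and let Th_{A,t}: G^n → {0,1} be the threshold function equal to 1 iff at least t coordinates lie in A ⊆ G. For an irrep ⃗ρ of G^n with exactly two nontrivial components, ρ_i = α and ρ_j = α* (i < j), the Fourier coefficient satisfies Tĥ_{A,t}(⃗ρ) = ((a^{n−2}_{t−2} − a^{n−2}_{t−1})/|G|^{n−2}) · 1̂_A(α) ⊗ 1̂_A(α*), where a^m_s := C(m,s)|A|^s|Aᶜ|^{m−s} and 1̂_A(α) = E_x[1_A(x)α(x)]. -/
import Mathlib


open Matrix Finset

def IsIrreducibleRep {G : Type*} [Group G] {d : ℕ}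
    (ρ : G →* Matrix.unitaryGroup (Fin d) ℂ) : Prop :=
  ∀ V : Submodule ℂ (Fin d → ℂ),
    (∀ g : G, V.map ((ρ g : Matrix (Fin d) (Fin d) ℂ).mulVecLin) ≤ V) →
    V = ⊥ ∨ V = ⊤

/-- The threshold function `Th_{A,t} : G^n → {0,1}`, equal to `1` iff at least
`t` coordinates lie in `A`. -/
def thresholdFn {G : Type*} [Fintype G] [DecidableEq G] (A : Finset G)
    (t : ℕ) {n : ℕ} (x : Fin n → G) : ℂ :=
  if t ≤ (Finset.univ.filter fun i => x i ∈ A).card then 1 else 0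

lemma sum_irrep_eq_zero {G : Type*} [Group G] [Fintype G] {d : ℕ}
    (α : G →* Matrix.unitaryGroup (Fin d) ℂ) (hirr : IsIrreducibleRep α)
    (hnontriv : ∃ g : G, (α g : Matrix (Fin d) (Fin d) ℂ) ≠ 1) :
    ∑ g : G, (α g : Matrix (Fin d) (Fin d) ℂ) = 0 := by
  set P : Matrix (Fin d) (Fin d) ℂ := ∑ g : G, (α g : Matrix (Fin d) (Fin d) ℂ) with hPdef
  have hP : ∀ h : G, (α h : Matrix (Fin d) (Fin d) ℂ) * P = P := by
    intro h
    rw [hPdef, Finset.mul_sum]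
    exact Fintype.sum_equiv (Equiv.mulLeft h)
      (fun g => (α h : Matrix (Fin d) (Fin d) ℂ) * (α g : Matrix (Fin d) (Fin d) ℂ))
      (fun g => (α g : Matrix (Fin d) (Fin d) ℂ))
      (fun g => by simp only [Equiv.coe_mulLeft, _root_.map_mul, Submonoid.coe_mul])
  set V : Submodule ℂ (Fin d → ℂ) := LinearMap.range P.mulVecLin with hVdef
  have hinv : ∀ g : G, V.map ((α g : Matrix (Fin d) (Fin d) ℂ).mulVecLin) ≤ V := by
    rintro g _ ⟨_, ⟨w, rfl⟩, rfl⟩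
    refine ⟨w, ?_⟩
    have := congrArg Matrix.mulVecLin (hP g)
    rw [Matrix.mulVecLin_mul] at this
    have h2 := congrFun (congrArg DFunLike.coe this) w
    simpa using h2.symm
  rcases hirr V hinv with hbot | htop
  · have h0 : P.mulVecLin = 0 := LinearMap.range_eq_bot.mp hbot
    ext a b
    have := congrFun (congrFun (congrArg DFunLike.coe h0) (Pi.single b 1)) a
    simpa [Matrix.mulVecLin, Matrix.mulVec_single] using this
  · exfalso
    obtain ⟨g, hg⟩ := hnontriv
    apply hg
    have hfix : ∀ v : Fin d → ℂ, (α g : Matrix (Fin d) (Fin d) ℂ) *ᵥ v = v := by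
      intro v
      have hv : v ∈ V := htop ▸ Submodule.mem_top
      obtain ⟨w, rfl⟩ := hv
      have := congrArg Matrix.mulVecLin (hP g)
      rw [Matrix.mulVecLin_mul] at this
      exact congrFun (congrArg DFunLike.coe this) w
    ext a b
    have := congrFun (hfix (Pi.single b 1)) a
    simpa [Matrix.mulVec_single, Matrix.one_apply, Pi.single_apply, eq_comm] using this

lemma cnt_formula {G : Type*} [Fintype G] [DecidableEq G] (A : Finset G) :
    ∀ (m s : ℕ),
      (∑ x : Fin m → G, if (∑ k, if x k ∈ A then (1:ℕ) else 0) = s then (1:ℕ) else 0)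
        = m.choose s * A.card ^ s * (Aᶜ).card ^ (m - s) := by
  intro m
  induction m with
  | zero => intro s; cases s <;> simp
  | succ m ih =>
    intro s
    have hcount : ∀ (g : G) (y : Fin m → G),
        (∑ k : Fin (m+1), if (Fin.cons g y : Fin (m+1) → G) k ∈ A then (1:ℕ) else 0)
          = (if g ∈ A then 1 else 0) + ∑ k, if y k ∈ A then (1:ℕ) else 0 := by
      intro g y
      rw [Fin.sum_univ_succ]
      simp only [Fin.cons_zero, Fin.cons_succ]
    have hsplit : (∑ x : Fin (m+1) → G, if (∑ k, if x k ∈ A then (1:ℕ) else 0) = s then (1:ℕ) else 0)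
        = ∑ p : G × (Fin m → G),
            if ((if p.1 ∈ A then 1 else 0) + ∑ k, if p.2 k ∈ A then (1:ℕ) else 0) = s
            then (1:ℕ) else 0 := by
      refine (Fintype.sum_equiv (Fin.consEquiv (fun _ => G)) _ _ (fun p => ?_)).symm
      refine if_congr ?_ rfl rfl
      rw [show ((Fin.consEquiv (fun _ => G)) p) = (Fin.cons p.1 p.2 : Fin (m+1) → G) from rfl, hcount]
    rw [hsplit, Fintype.sum_prod_type]
    have hg : ∀ g : G, (∑ y : Fin m → G,
        if ((if g ∈ A then 1 else 0) + ∑ k, if y k ∈ A then (1:ℕ) else 0) = s then (1:ℕ) else 0)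
        = if g ∈ A then (∑ y : Fin m → G, if (1 + ∑ k, if y k ∈ A then (1:ℕ) else 0) = s then (1:ℕ) else 0)
          else (∑ y : Fin m → G, if (∑ k, if y k ∈ A then (1:ℕ) else 0) = s then (1:ℕ) else 0) := by
      intro g; by_cases hgA : g ∈ A
      · simp only [if_pos hgA]
      · simp only [if_neg hgA, zero_add]
    rw [Finset.sum_congr rfl (fun g _ => hg g), Finset.sum_ite, Finset.sum_const, Finset.sum_const]
    have h1 : Finset.univ.filter (fun g : G => g ∈ A) = A := by ext g; simp
    have h2 : Finset.univ.filter (fun g : G => ¬ g ∈ A) = Aᶜ := by ext g; simp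
    rw [h1, h2, smul_eq_mul, smul_eq_mul, ih]
    cases s with
    | zero =>
      have hz : (∑ y : Fin m → G, if (1 + ∑ k, if y k ∈ A then (1:ℕ) else 0) = 0 then (1:ℕ) else 0) = 0 :=
        Finset.sum_eq_zero fun y _ => by simp
      rw [hz, mul_zero, zero_add]
      simp [pow_succ]
      ring
    | succ s =>
      have hshift : (∑ y : Fin m → G, if (1 + ∑ k, if y k ∈ A then (1:ℕ) else 0) = s + 1 then (1:ℕ) else 0)
          = ∑ y : Fin m → G, if (∑ k, if y k ∈ A then (1:ℕ) else 0) = s then (1:ℕ) else 0 :=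
        Finset.sum_congr rfl fun y _ => if_congr (by clear ih hcount hsplit hg h1 h2; omega) rfl rfl
      rw [hshift, ih]
      rcases Nat.lt_or_ge s m with hsm | hsm
      · have e1 : m - s = (m - (s+1)) + 1 := by clear ih hcount hsplit hg h1 h2 hshift; omega
        have e2 : m + 1 - (s + 1) = m - s := by clear ih hcount hsplit hg h1 h2 hshift; omega
        rw [Nat.choose_succ_succ, e2, e1]
        ring
      · rcases Nat.eq_or_lt_of_le hsm with hEq | hlt
        · subst hEq
          simp [Nat.choose_succ_succ, Nat.choose_eq_zero_of_lt (Nat.lt_succ_self m)]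
          ring
        · rw [Nat.choose_eq_zero_of_lt (by clear ih hcount hsplit hg h1 h2 hshift; omega), Nat.choose_eq_zero_of_lt (by clear ih hcount hsplit hg h1 h2 hshift; omega),
            Nat.choose_eq_zero_of_lt (by clear ih hcount hsplit hg h1 h2 hshift; omega)]
          ring

lemma key_split {G : Type*} [Fintype G] [DecidableEq G] (A : Finset G) (f : G → ℂ)
    (h0 : ∑ g : G, f g = 0) (F : ℕ → ℂ) :
    ∑ g : G, f g * F (if g ∈ A then 1 else 0)
      = (∑ g ∈ A, f g) * (F 1 - F 0) := by
  have hc : ∑ g ∈ Aᶜ, f g = - ∑ g ∈ A, f g := by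
    have h := Finset.sum_add_sum_compl A f
    rw [h0] at h
    linear_combination h
  rw [← Finset.sum_add_sum_compl A]
  rw [Finset.sum_congr rfl (fun g hg => by rw [if_pos hg]),
      Finset.sum_congr (rfl : (Aᶜ : Finset G) = Aᶜ)
        (fun g hg => by rw [if_neg (Finset.mem_compl.mp hg)])]
  rw [← Finset.sum_mul, ← Finset.sum_mul, hc]
  ring

/-- The level-2 Fourier coefficient of the threshold function at the tensor
representation with `ρ_i = α`, `ρ_j = α*` (`i < j`) and trivial components
elsewhere: entrywise it equals
`((a^{n−2}_{t−2} − a^{n−2}_{t−1})/|G|^{n−2}) · (1̂_A(α) ⊗ 1̂_A(α*))`, with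
`a^m_s = C(m,s)|A|^s|Aᶜ|^{m−s}` and `1̂_A(α) = E_x[1_A(x) α(x)]`. -/
theorem threshold_fourier_coeff_level_two {G : Type*} [Group G] [Fintype G]
    [DecidableEq G] (A : Finset G) {n : ℕ} (t : ℕ) (ht2 : 2 ≤ t) (htn : t ≤ n)
    {d : ℕ} (α : G →* Matrix.unitaryGroup (Fin d) ℂ)
    (hirr : IsIrreducibleRep α)
    (hnontriv : ∃ g : G, (α g : Matrix (Fin d) (Fin d) ℂ) ≠ 1)
    (i j : Fin n) (hij : i < j) :
    ∀ a₁ b₁ a₂ b₂ : Fin d,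
      ((Fintype.card G : ℂ) ^ n)⁻¹ *
          ∑ x : Fin n → G, thresholdFn A t x *
            ((α (x i) : Matrix (Fin d) (Fin d) ℂ) a₁ b₁ *
              (starRingEnd ℂ) ((α (x j) : Matrix (Fin d) (Fin d) ℂ) a₂ b₂))
        = (((((n - 2).choose (t - 2) : ℝ) * (A.card : ℝ) ^ (t - 2) *
                ((Aᶜ).card : ℝ) ^ (n - t)
              - ((n - 2).choose (t - 1) : ℝ) * (A.card : ℝ) ^ (t - 1) *
                ((Aᶜ).card : ℝ) ^ (n - 1 - t))
            / (Fintype.card G : ℝ) ^ (n - 2) : ℝ) : ℂ) *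
          (((Fintype.card G : ℂ)⁻¹ * ∑ x ∈ A, (α x : Matrix (Fin d) (Fin d) ℂ) a₁ b₁) *
            ((Fintype.card G : ℂ)⁻¹ *
              ∑ x ∈ A, (starRingEnd ℂ) ((α x : Matrix (Fin d) (Fin d) ℂ) a₂ b₂))) := by
  intro a₁ b₁ a₂ b₂
  have hijne : i ≠ j := ne_of_lt hij
  have hn2 : 2 ≤ n := le_trans ht2 htn
  -- entrywise vanishing of the full group sum
  have hzero : ∀ a b : Fin d, ∑ g : G, (α g : Matrix (Fin d) (Fin d) ℂ) a b = 0 := by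
    intro a b
    have h := sum_irrep_eq_zero α hirr hnontriv
    calc ∑ g : G, (α g : Matrix (Fin d) (Fin d) ℂ) a b
        = (∑ g : G, (α g : Matrix (Fin d) (Fin d) ℂ)) a b := by
          rw [Matrix.sum_apply]
      _ = 0 := by rw [h]; rfl
  have hzeroc : ∑ g : G, (starRingEnd ℂ) ((α g : Matrix (Fin d) (Fin d) ℂ) a₂ b₂) = 0 := by
    rw [← map_sum, hzero a₂ b₂, map_zero]
  -- notation
  set M : G → ℂ := fun g => (α g : Matrix (Fin d) (Fin d) ℂ) a₁ b₁ with hM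
  set N : G → ℂ := fun g => (starRingEnd ℂ) ((α g : Matrix (Fin d) (Fin d) ℂ) a₂ b₂) with hN
  set w : G → ℕ := fun g => if g ∈ A then 1 else 0 with hw
  -- the equivalence splitting off coordinates i and j
  let Φ : G × G × ({k : Fin n // k ≠ i ∧ k ≠ j} → G) ≃ (Fin n → G) :=
    { toFun := fun p k =>
        if h1 : k = i then p.1 else if h2 : k = j then p.2.1 else p.2.2 ⟨k, h1, h2⟩
      invFun := fun x => (x i, x j, fun k => x k.1)
      left_inv := by
        rintro ⟨g, h, y⟩
        refine Prod.ext ?_ (Prod.ext ?_ ?_)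
        · simp
        · simp [hijne.symm]
        · funext k
          simp [k.2.1, k.2.2]
      right_inv := by
        intro x; funext k
        by_cases h1 : k = i
        · subst h1; simp
        · by_cases h2 : k = j
          · subst h2; simp [h1]
          · simp [h1, h2] }
  have hΦi : ∀ p, Φ p i = p.1 := by intro p; simp [Φ]
  have hΦj : ∀ p, Φ p j = p.2.1 := by intro p; simp [Φ, hijne.symm]
  -- counting the coordinates of Φ p lying in A
  have hcnt : ∀ p : G × G × ({k : Fin n // k ≠ i ∧ k ≠ j} → G),
      (Finset.univ.filter fun k => Φ p k ∈ A).card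
        = w p.1 + (w p.2.1 + ∑ k : {k : Fin n // k ≠ i ∧ k ≠ j}, w (p.2.2 k)) := by
    rintro ⟨g, h, y⟩
    rw [Finset.card_filter]
    have huniv : (Finset.univ : Finset (Fin n))
        = insert i (insert j (Finset.univ \ ({i, j} : Finset (Fin n)))) := by
      ext k
      by_cases h1 : k = i
      · simp [h1]
      · by_cases h2 : k = j <;> simp [h1, h2]
    rw [huniv, Finset.sum_insert (by simp [hijne]), Finset.sum_insert (by simp)]
    have hsub : ∑ k ∈ Finset.univ \ ({i, j} : Finset (Fin n)),
        (if Φ (g, h, y) k ∈ A then (1:ℕ) else 0)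
        = ∑ k : {k : Fin n // k ≠ i ∧ k ≠ j}, (if Φ (g, h, y) k.1 ∈ A then (1:ℕ) else 0) := by
      apply Finset.sum_subtype
      intro k; simp [and_comm]
    rw [hsub, hΦi ⟨g, h, y⟩, hΦj ⟨g, h, y⟩]
    congr 1
    congr 1
    refine Finset.sum_congr rfl fun k _ => ?_
    have hk : Φ (g, h, y) k.1 = y k := by
      simp [Φ, k.2.1, k.2.2]
    rw [hk]
  -- rewrite the big sum through Φ
  have hmain : ∑ x : Fin n → G, thresholdFn A t x * (M (x i) * N (x j))
      = ∑ g : G, ∑ h : G, ∑ y : {k : Fin n // k ≠ i ∧ k ≠ j} → G,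
          (if t ≤ w g + (w h + ∑ k, w (y k)) then (1:ℂ) else 0) * (M g * N h) := by
    rw [← Equiv.sum_comp Φ (fun x => thresholdFn A t x * (M (x i) * N (x j))),
      Fintype.sum_prod_type]
    refine Finset.sum_congr rfl fun g _ => ?_
    rw [Fintype.sum_prod_type]
    refine Finset.sum_congr rfl fun h _ => ?_
    refine Finset.sum_congr rfl fun y _ => ?_
    rw [hΦi ⟨g, h, y⟩, hΦj ⟨g, h, y⟩]
    unfold thresholdFn
    rw [hcnt ⟨g, h, y⟩]
  -- abbreviations for the two level-one sums
  set SA : ℂ := ∑ g ∈ A, M g with hSA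
  set SB : ℂ := ∑ g ∈ A, N g with hSB
  set Q : ℕ → ℂ := fun r => ∑ y : {k : Fin n // k ≠ i ∧ k ≠ j} → G,
    if t ≤ r + ∑ k, w (y k) then (1:ℂ) else 0 with hQ
  set F : ℕ → ℂ := fun m => ∑ h : G,
    N h * ∑ y : {k : Fin n // k ≠ i ∧ k ≠ j} → G,
      (if t ≤ m + (w h + ∑ k, w (y k)) then (1:ℂ) else 0) with hF
  -- second application of key_split : F m = SB * (Q (m+1) - Q (m+0))
  have hFm : ∀ m : ℕ, F m = SB * (Q (m + 1) - Q (m + 0)) := by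
    intro m
    have h1 : F m = ∑ h : G, N h * (fun k => Q (m + k)) (if h ∈ A then 1 else 0) := by
      rw [hF]
      refine Finset.sum_congr rfl fun h _ => ?_
      congr 1
      simp only [hQ, hw]
      refine Finset.sum_congr rfl fun y _ => ?_
      refine if_congr (iff_of_eq ?_) rfl rfl
      rw [add_assoc]
    rw [h1, key_split A N hzeroc (fun k => Q (m + k))]
  -- first application of key_split
  have hstep1 : (∑ g : G, ∑ h : G, ∑ y : {k : Fin n // k ≠ i ∧ k ≠ j} → G,
      (if t ≤ w g + (w h + ∑ k, w (y k)) then (1:ℂ) else 0) * (M g * N h))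
      = SA * (F 1 - F 0) := by
    have h1 : ∀ g : G, (∑ h : G, ∑ y : {k : Fin n // k ≠ i ∧ k ≠ j} → G,
        (if t ≤ w g + (w h + ∑ k, w (y k)) then (1:ℂ) else 0) * (M g * N h))
        = M g * F (w g) := by
      intro g
      rw [hF, Finset.mul_sum]
      refine Finset.sum_congr rfl fun h _ => ?_
      rw [Finset.mul_sum, Finset.mul_sum]
      refine Finset.sum_congr rfl fun y _ => ?_
      ring
    rw [Finset.sum_congr rfl fun g _ => h1 g]
    have h2 : ∀ g : G, M g * F (w g) = M g * F (if g ∈ A then 1 else 0) := by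
      intro g; rw [hw]
    rw [Finset.sum_congr rfl fun g _ => h2 g, key_split A M (hzero a₁ b₁) F]
  -- counting lemma transported to the subtype
  have hκcard : Fintype.card {k : Fin n // k ≠ i ∧ k ≠ j} = n - 2 := by
    rw [Fintype.card_subtype]
    have hfe : (Finset.univ.filter fun k : Fin n => k ≠ i ∧ k ≠ j)
        = Finset.univ \ ({i, j} : Finset (Fin n)) := by
      ext k; simp [and_comm]
    rw [hfe, Finset.card_sdiff_of_subset (Finset.subset_univ _)]
    rw [Finset.card_insert_of_notMem (by simp [hijne]), Finset.card_singleton]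
    simp
  have hE : ∀ s : ℕ, (∑ y : {k : Fin n // k ≠ i ∧ k ≠ j} → G,
      if (∑ k, w (y k)) = s then (1:ℂ) else 0)
      = (((n-2).choose s * A.card ^ s * (Aᶜ).card ^ (n-2-s) : ℕ) : ℂ) := by
    intro s
    obtain e := Fintype.equivFinOfCardEq hκcard
    have htrans : (∑ y : {k : Fin n // k ≠ i ∧ k ≠ j} → G,
        if (∑ k, w (y k)) = s then (1:ℂ) else 0)
        = ∑ z : Fin (n-2) → G, if (∑ k, w (z k)) = s then (1:ℂ) else 0 := by
      refine Fintype.sum_equiv (Equiv.arrowCongr e (Equiv.refl G)) _ _ fun y => ?_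
      refine if_congr (iff_of_eq ?_) rfl rfl
      have := Equiv.sum_comp e.symm (fun k => w (y k))
      simp only [Equiv.arrowCongr_apply, Equiv.coe_refl, Function.comp]
      rw [← this]
      rfl
    rw [htrans]
    have hcast : (∑ z : Fin (n-2) → G, if (∑ k, w (z k)) = s then (1:ℂ) else 0)
        = ((∑ z : Fin (n-2) → G, if (∑ k, w (z k)) = s then (1:ℕ) else 0 : ℕ) : ℂ) := by
      rw [Nat.cast_sum]
      refine Finset.sum_congr rfl fun z _ => ?_
      by_cases hc : (∑ k, w (z k)) = s <;> simp [hc]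
    rw [hcast]
    congr 1
    simp only [hw]
    exact cnt_formula A (n-2) s
  -- difference identities
  have hQ21 : Q 2 - Q 1 = (((n-2).choose (t-2) * A.card ^ (t-2) * (Aᶜ).card ^ (n-2-(t-2)) : ℕ) : ℂ) := by
    rw [hQ, ← hE (t-2), ← Finset.sum_sub_distrib]
    refine Finset.sum_congr rfl fun y _ => ?_
    by_cases h1 : t ≤ 2 + ∑ k, w (y k)
    · by_cases h2 : t ≤ 1 + ∑ k, w (y k)
      · rw [if_pos h1, if_pos h2, if_neg (by omega)]; ring
      · rw [if_pos h1, if_neg h2, if_pos (by omega)]; ring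
    · rw [if_neg h1, if_neg (by omega), if_neg (by omega)]; ring
  have hQ10 : Q 1 - Q 0 = (((n-2).choose (t-1) * A.card ^ (t-1) * (Aᶜ).card ^ (n-2-(t-1)) : ℕ) : ℂ) := by
    rw [hQ, ← hE (t-1), ← Finset.sum_sub_distrib]
    refine Finset.sum_congr rfl fun y _ => ?_
    by_cases h1 : t ≤ 1 + ∑ k, w (y k)
    · by_cases h2 : t ≤ 0 + ∑ k, w (y k)
      · rw [if_pos h1, if_pos h2, if_neg (by omega)]; ring
      · rw [if_pos h1, if_neg h2, if_pos (by omega)]; ring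
    · rw [if_neg h1, if_neg (by omega), if_neg (by omega)]; ring
  -- assemble
  rw [hmain, hstep1, hFm 1, hFm 0]
  norm_num
  rw [hQ21, hQ10]
  -- final algebra
  have he1 : n - 2 - (t - 2) = n - t := by omega
  have he2 : n - 2 - (t - 1) = n - 1 - t := by omega
  rw [he1, he2]
  have hcard : (0:ℝ) < (Fintype.card G : ℝ) := by
    exact_mod_cast Fintype.card_pos
  have hcardC : ((Fintype.card G : ℂ)) ≠ 0 := by
    exact_mod_cast (Fintype.card_ne_zero : Fintype.card G ≠ 0)
  have hpow : ((Fintype.card G : ℂ)) ^ n = (Fintype.card G : ℂ) ^ (n-2) * (Fintype.card G : ℂ) ^ 2 := by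
    rw [← pow_add]; congr 1; omega
  push_cast
  rw [hpow]
  field_simp
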